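/- arXiv:2101.04213 — 6 statements merged into one kernel-verified Lean document; each statement's English description precedes it below -/
import Mathlib

section
/- For every t ≥ 3 and n ≥ 2t-2, there exists a triangle-free S_t-saturated graph on n vertices. -/
open SimpleGraph

/-- Degree of a vertex, via `Set.ncard` (avoids decidability assumptions). -/
noncomputable def ndeg {V : Type*} (G : SimpleGraph V) (v : V) : ℕ :=
  (G.neighborSet v).ncard

/-- A graph contains a copy of the star `S_t` (with `t` edges) iff some vertex
has degree at least `t`. -/
def ContainsStar {V : Type*} (G : SimpleGraph V) (t : ℕ) : Prop :=
  ∃ v, t ≤ ndeg G v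

/-- `G` is `S_t`-saturated: it contains no copy of `S_t`, but adding any missing
edge creates one. -/
def StarSaturated {V : Type*} (G : SimpleGraph V) (t : ℕ) : Prop :=
  ¬ ContainsStar G t ∧
    ∀ u v : V, u ≠ v → ¬ G.Adj u v → ContainsStar (G ⊔ SimpleGraph.edge u v) t

/-! Put `d = t - 1` and `m = ⌊n/2⌋ ≥ d`. For a `d`-element subset `S` of `ℤ/m`, joining `a` on
one side to `b` on the other whenever `b - a ∈ S` gives a `d`-regular bipartite graph on `2m`
vertices, which has no triangle. Padded with at most one isolated vertex to `n` vertices, every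
non-edge still has an endpoint of degree `d`, so adding it creates a vertex of degree `t`. -/

variable {V W : Type*}

lemma neighborSet_sup_edge (G : SimpleGraph V) {u v : V} (huv : u ≠ v) :
    (G ⊔ edge u v).neighborSet u = insert v (G.neighborSet u) := by
  ext w
  simp only [mem_neighborSet, sup_adj, edge_adj, Set.mem_insert_iff]
  grind [G.loopless]

lemma ndeg_sup_edge [Finite V] {G : SimpleGraph V} {u v : V} (huv : u ≠ v)
    (hnadj : ¬ G.Adj u v) :
    ndeg (G ⊔ edge u v) u = ndeg G u + 1 := by
  rw [ndeg, neighborSet_sup_edge G huv,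
    Set.ncard_insert_of_notMem (show v ∉ G.neighborSet u from hnadj), ndeg]

lemma starSaturated_of_ndeg_le [Finite V] {G : SimpleGraph V} {d : ℕ}
    (hle : ∀ v, ndeg G v ≤ d)
    (hfull : ∀ u v, u ≠ v → ¬ G.Adj u v → ndeg G u = d ∨ ndeg G v = d) :
    StarSaturated G (d + 1) := by
  refine ⟨fun ⟨v, hv⟩ ↦ by have := hle v; omega, fun u v huv hnadj ↦ ?_⟩
  rcases hfull u v huv hnadj with hu | hv
  · exact ⟨u, by rw [ndeg_sup_edge huv hnadj, hu]⟩
  · exact ⟨v, by rw [edge_comm, ndeg_sup_edge huv.symm (fun h ↦ hnadj h.symm), hv]⟩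

lemma ndeg_map_apply (G : SimpleGraph V) (f : V ↪ W) (v : V) :
    ndeg (G.map f) (f v) = ndeg G v := by
  rw [ndeg, neighborSet_map, Set.ncard_image_of_injective _ f.injective, ndeg]

lemma ndeg_map_of_notMem_range (G : SimpleGraph V) {f : V ↪ W} {w : W} (hw : w ∉ Set.range f) :
    ndeg (G.map f) w = 0 := by
  rw [ndeg, Set.eq_empty_of_forall_notMem (s := (G.map f).neighborSet w), Set.ncard_empty]
  rintro x ⟨-, a, b, -, rfl, -⟩
  exact hw ⟨a, rfl⟩

lemma mem_range_or_mem_range_of_card_le_succ [Finite W] (f : V ↪ W)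
    (hcard : Nat.card W ≤ Nat.card V + 1) {u v : W} (huv : u ≠ v) :
    u ∈ Set.range f ∨ v ∈ Set.range f := by
  have : (Set.range f)ᶜ.ncard ≤ 1 := by
    rw [Set.ncard_compl, Set.ncard_range_of_injective f.injective]
    omega
  by_contra! h
  exact huv ((Set.ncard_le_one).1 this u h.1 v h.2)

lemma starSaturated_map_of_ndeg_eq [Finite W] {G : SimpleGraph V} {d : ℕ} (f : V ↪ W)
    (hreg : ∀ v, ndeg G v = d) (hcard : Nat.card W ≤ Nat.card V + 1) :
    StarSaturated (G.map f) (d + 1) := by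
  have hrange : ∀ w ∈ Set.range f, ndeg (G.map f) w = d := by
    rintro _ ⟨v, rfl⟩
    rw [ndeg_map_apply, hreg]
  refine starSaturated_of_ndeg_le (fun w ↦ ?_) fun u v huv _ ↦
    (mem_range_or_mem_range_of_card_le_succ f hcard huv).imp (hrange u) (hrange v)
  by_cases hw : w ∈ Set.range f
  · exact (hrange w hw).le
  · simp [ndeg_map_of_notMem_range G hw]

def bipartiteCayley {A : Type*} [AddGroup A] (S : Set A) : SimpleGraph (A ⊕ A) where
  Adj
    | .inl a, .inr b | .inr b, .inl a => b - a ∈ S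
    | _, _ => False
  symm := ⟨by rintro (a | a) (b | b) h <;> exact h⟩
  loopless := ⟨by rintro (a | a) h <;> exact h⟩

namespace bipartiteCayley

variable {A : Type*} [AddGroup A] (S : Set A)

@[simp] lemma adj_inl_inr {a b : A} : (bipartiteCayley S).Adj (.inl a) (.inr b) ↔ b - a ∈ S :=
  Iff.rfl

@[simp] lemma adj_inr_inl {a b : A} : (bipartiteCayley S).Adj (.inr b) (.inl a) ↔ b - a ∈ S :=
  Iff.rfl

@[simp] lemma not_adj_inl_inl {a b : A} : ¬ (bipartiteCayley S).Adj (.inl a) (.inl b) :=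
  id

@[simp] lemma not_adj_inr_inr {a b : A} : ¬ (bipartiteCayley S).Adj (.inr a) (.inr b) :=
  id

lemma neighborSet_inl (a : A) :
    (bipartiteCayley S).neighborSet (.inl a) = .inr '' ((· - a) ⁻¹' S) := by
  ext (b | b) <;> simp [mem_neighborSet]

lemma neighborSet_inr (b : A) :
    (bipartiteCayley S).neighborSet (.inr b) = .inl '' ((b - ·) ⁻¹' S) := by
  ext (a | a) <;> simp [mem_neighborSet]

lemma ndeg_eq (x : A ⊕ A) : ndeg (bipartiteCayley S) x = S.ncard := by
  rcases x with a | b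
  · rw [ndeg, neighborSet_inl, Set.ncard_image_of_injective _ Sum.inr_injective,
      Set.ncard_preimage_of_injective_subset_range sub_left_injective
        fun s _ ↦ ⟨s + a, add_sub_cancel_right s a⟩]
  · rw [ndeg, neighborSet_inr, Set.ncard_image_of_injective _ Sum.inl_injective,
      Set.ncard_preimage_of_injective_subset_range sub_right_injective
        fun s _ ↦ ⟨-s + b, by simp [sub_eq_add_neg]⟩]

lemma cliqueFree_three : (bipartiteCayley S).CliqueFree 3 := by
  let c : (bipartiteCayley S).Coloring Bool :=
    Coloring.mk Sum.isLeft fun {x y} h ↦ by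
      rcases x with _ | _ <;> rcases y with _ | _ <;> simp_all
  exact c.colorable.cliqueFree (by simp)

end bipartiteCayley

theorem stmt1 (t n : ℕ) (ht : 3 ≤ t) (hn : 2 * t - 2 ≤ n) :
    ∃ G : SimpleGraph (Fin n), G.CliqueFree 3 ∧ StarSaturated G t := by
  obtain ⟨d, rfl⟩ : ∃ d, t = d + 1 := ⟨t - 1, by omega⟩
  set m := n / 2
  have : NeZero m := ⟨by omega⟩
  have hcard : Nat.card (ZMod m ⊕ ZMod m) = 2 * m := by
    rw [Nat.card_sum, Nat.card_zmod]
    ring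
  obtain ⟨S, -, hS⟩ := Set.exists_subset_card_eq (s := (Set.univ : Set (ZMod m))) (n := d)
    (by rw [Set.ncard_univ, Nat.card_zmod]; omega)
  obtain ⟨f⟩ : Nonempty (ZMod m ⊕ ZMod m ↪ Fin n) :=
    Function.Embedding.nonempty_of_card_le <| by
      rw [Fintype.card_sum, ZMod.card, Fintype.card_fin]; omega
  refine ⟨(bipartiteCayley S).map f, cliqueFree_map_iff.2 (bipartiteCayley.cliqueFree_three S),
    starSaturated_map_of_ndeg_eq f (fun x ↦ (bipartiteCayley.ndeg_eq S x).trans hS) ?_⟩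
  rw [hcard, Nat.card_fin]
  omega
end

section
/- If a, b are real numbers and c is an integer with a ≥ c ≥ 2 and b > 1, then b^c · binom(⌊a/b⌋, c) < binom(a, c), where binom(x, c) = x(x-1)···(x-c+1)/c! is the generalized binomial coefficient. -/
/-- The generalized binomial coefficient `binom(x, c) = x(x-1)⋯(x-c+1)/c!`
for a real number `x`. -/
noncomputable def genBinom (x : ℝ) (c : ℕ) : ℝ :=
  (∏ i ∈ Finset.range c, (x - i)) / (c.factorial : ℝ)

theorem stmt5 (a b : ℝ) (c : ℕ) (hc : 2 ≤ c) (hac : (c : ℝ) ≤ a) (hb : 1 < b) :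
    b ^ c * genBinom ((⌊a / b⌋ : ℤ) : ℝ) c < genBinom a c := by
  have hb0 : (0:ℝ) < b := lt_trans one_pos hb
  have hc0 : (0:ℝ) < c := by positivity
  set m : ℤ := ⌊a / b⌋ with hm
  have hm0 : 0 ≤ m := Int.floor_nonneg.2 (div_nonneg (by linarith) hb0.le)
  have hbm : b * (m : ℝ) ≤ a := by
    have := Int.floor_le (a / b)
    calc b * (m : ℝ) ≤ b * (a / b) := by nlinarith
    _ = a := by field_simp
  have hfact : (0:ℝ) < (c.factorial : ℝ) := by positivity
  have hApos : 0 < ∏ i ∈ Finset.range c, (a - (i:ℝ)) := by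
    apply Finset.prod_pos
    intro i hi
    have : (i:ℝ) < c := by exact_mod_cast Finset.mem_range.1 hi
    linarith
  rcases lt_or_ge m c with hlt | hge
  · -- floor is small: LHS is zero
    have hz : ∏ i ∈ Finset.range c, ((m:ℝ) - (i:ℝ)) = 0 := by
      apply Finset.prod_eq_zero (i := m.toNat)
      · exact Finset.mem_range.2 (by omega)
      · have h := Int.toNat_of_nonneg hm0
        have : ((m.toNat : ℤ) : ℝ) = ((m:ℤ) : ℝ) := by exact_mod_cast congrArg (fun z : ℤ => (z:ℝ)) h
        push_cast at this ⊢
        linarith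
    unfold genBinom
    rw [hz]
    have : (0:ℝ) < (∏ i ∈ Finset.range c, (a - (i:ℝ))) / (c.factorial : ℝ) := by positivity
    simpa using this
  · -- m ≥ c : termwise comparison
    have key : ∏ i ∈ Finset.range c, (b * ((m:ℝ) - (i:ℝ))) <
        ∏ i ∈ Finset.range c, (a - (i:ℝ)) := by
      apply Finset.prod_lt_prod
      · intro i hi
        have hic : i < c := Finset.mem_range.1 hi
        have h1 : (i:ℝ) + 1 ≤ (m:ℝ) := by
          have : (i:ℤ) + 1 ≤ m := by omega
          exact_mod_cast this
        nlinarith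
      · intro i hi
        have hi0 : (0:ℝ) ≤ (i:ℝ) := Nat.cast_nonneg i
        nlinarith
      · refine ⟨1, Finset.mem_range.2 (by omega), ?_⟩
        push_cast
        nlinarith
    unfold genBinom
    calc b ^ c * ((∏ i ∈ Finset.range c, ((m:ℝ) - (i:ℝ))) / (c.factorial : ℝ))
        = (∏ i ∈ Finset.range c, (b * ((m:ℝ) - (i:ℝ)))) / (c.factorial : ℝ) := by
          rw [Finset.prod_mul_distrib, Finset.prod_const, Finset.card_range]
          ring
      _ < (∏ i ∈ Finset.range c, (a - (i:ℝ))) / (c.factorial : ℝ) := by gcongr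
end

section
/- Let t ≥ 3 be odd and r ≥ 2 with t > r. For every integer m with r ≤ m ≤ (t-1)/2, we have (r+1)·binom(m, r) < binom(t-1, r). -/
lemma aux6 : ∀ r, 2 ≤ r → ∀ m, r ≤ m → (r + 1) * Nat.choose m r < Nat.choose (2 * m) r := by
  intro r hr
  induction r, hr using Nat.le_induction with
  | base =>
    intro m hm
    rw [Nat.choose_two_right, Nat.choose_two_right]
    obtain ⟨k, hk⟩ := Nat.even_mul_succ_self (m - 1)
    have hm1 : m - 1 + 1 = m := by omega
    rw [hm1, mul_comm] at hk
    have hmk : m * (m - 1) = 2 * k := by omega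
    have h1 : m * (m - 1) / 2 = k := by omega
    have h2 : 2 * m * (2 * m - 1) / 2 = m * (2 * m - 1) := by
      rw [mul_assoc, Nat.mul_div_cancel_left _ (by norm_num)]
    rw [h1, h2]
    have ha : 2 * m - 1 = 2 * (m - 1) + 1 := by omega
    rw [ha]
    nlinarith [hmk, hm]
  | succ r hr ih =>
    intro m hm
    have ih' := ih m (by omega)
    have key : (r + 1 + 1) * Nat.choose m (r + 1) * (r + 1)
        < Nat.choose (2 * m) (r + 1) * (r + 1) := by
      rw [mul_assoc, Nat.choose_succ_right_eq, Nat.choose_succ_right_eq]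
      have h1 : Nat.choose (2 * m) r * (2 * m - r) > (r + 1) * Nat.choose m r * (2 * m - r) := by
        apply Nat.mul_lt_mul_of_lt_of_le ih' (le_refl _) (by omega)
      have h2 : (r + 1 + 1) * (Nat.choose m r * (m - r)) ≤ (r + 1) * Nat.choose m r * (2 * m - r) := by
        have hmr : m - r ≥ 1 := by omega
        have : (r + 2) * (m - r) ≤ (r + 1) * (2 * m - r) := by
          have h3 : m - r + r = m := by omega
          have h4 : 2 * m - r = (m - r) + m := by omega
          nlinarith [h3, h4, hmr, hm]
        calc (r + 1 + 1) * (Nat.choose m r * (m - r))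
            = ((r + 2) * (m - r)) * Nat.choose m r := by ring
          _ ≤ ((r + 1) * (2 * m - r)) * Nat.choose m r := Nat.mul_le_mul_right _ this
          _ = (r + 1) * Nat.choose m r * (2 * m - r) := by ring
      omega
    exact Nat.lt_of_mul_lt_mul_right key

theorem stmt6 (t r m : ℕ) (ht : 3 ≤ t) (hodd : Odd t) (hr : 2 ≤ r) (hrt : r < t)
    (hm1 : r ≤ m) (hm2 : 2 * m ≤ t - 1) :
    (r + 1) * Nat.choose m r < Nat.choose (t - 1) r := by
  calc (r + 1) * Nat.choose m r < Nat.choose (2 * m) r := aux6 r hr m hm1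
    _ ≤ Nat.choose (t - 1) r := Nat.choose_le_choose r hm2
end

section
/- Let t ≥ 3 be odd and r ≥ 2 with t > r. Then (r+1)·binom(⌊(t-1)/(r+1)^{1/r}⌋, r) < binom(t-1, r). -/
lemma key_descFac (n : ℕ) : ∀ k, 2 ≤ k → ∀ m, k ≤ m → m < n →
    Nat.descFactorial m k * n ^ k < m ^ k * Nat.descFactorial n k := by
  intro k hk
  induction k, hk using Nat.le_induction with
  | base =>
    intro m hm hmn
    have h1m : 1 ≤ m := by omega
    have h1n : 1 ≤ n := by omega
    simp only [Nat.descFactorial_succ, Nat.descFactorial_zero, Nat.descFactorial_one,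
      Nat.sub_zero, mul_one]
    zify [h1m, h1n]
    have hmn' : (m:ℤ) < n := by exact_mod_cast hmn
    have hm0 : (0:ℤ) < m := by exact_mod_cast h1m
    have hn0 : (0:ℤ) < n := by exact_mod_cast h1n
    have h : (0:ℤ) < (m:ℤ) * n * ((n:ℤ) - m) :=
      mul_pos (mul_pos hm0 hn0) (by linarith)
    nlinarith [h]
  | succ k hk IH =>
    intro m hm hmn
    have hkm : k ≤ m := by omega
    have hkn : k ≤ n := by omega
    have hIH := IH m hkm hmn
    have hA : (m - k) * n ≤ m * (n - k) := by
      zify [hkm, hkn]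
      nlinarith [Nat.mul_le_mul_left k (le_of_lt hmn)]
    have hpos : 0 < m * (n - k) := by
      have h1 : 0 < m := by omega
      have h2 : 0 < n - k := by omega
      positivity
    rw [Nat.descFactorial_succ, Nat.descFactorial_succ, pow_succ, pow_succ]
    calc (m - k) * Nat.descFactorial m k * (n ^ k * n)
        = ((m - k) * n) * (Nat.descFactorial m k * n ^ k) := by ring
      _ ≤ (m * (n - k)) * (Nat.descFactorial m k * n ^ k) :=
          Nat.mul_le_mul_right _ hA
      _ < (m * (n - k)) * (m ^ k * Nat.descFactorial n k) :=
          mul_lt_mul_of_pos_left hIH hpos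
      _ = m ^ k * m * ((n - k) * Nat.descFactorial n k) := by ring

theorem stmt7 (t r : ℕ) (ht : 3 ≤ t) (hodd : Odd t) (hr : 2 ≤ r) (hrt : r < t) :
    (r + 1) * Nat.choose ⌊((t : ℝ) - 1) / ((r : ℝ) + 1) ^ ((1 : ℝ) / r)⌋₊ r <
      Nat.choose (t - 1) r := by
  set c : ℝ := ((r : ℝ) + 1) ^ ((1 : ℝ) / r) with hc
  set m : ℕ := ⌊((t : ℝ) - 1) / c⌋₊ with hm
  have hr0 : (0:ℝ) < r := by exact_mod_cast (by omega : 0 < r)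
  have hc0 : 0 < c := by
    apply Real.rpow_pos_of_pos; positivity
  have hc1 : 1 < c := by
    rw [hc]
    have h2r : (2:ℝ) ≤ r := by exact_mod_cast hr
    exact (Real.one_lt_rpow_iff_of_pos (by positivity)).mpr
      (Or.inl ⟨by linarith, by positivity⟩)
  have ht1 : (0:ℝ) < (t:ℝ) - 1 := by
    have : (3:ℝ) ≤ t := by exact_mod_cast ht
    linarith
  have hcast : ((t - 1 : ℕ) : ℝ) = (t:ℝ) - 1 := by
    have : 1 ≤ t := by omega
    push_cast [this]; ring
  -- c ^ r = r + 1
  have hcr : c ^ r = (r:ℝ) + 1 := by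
    rw [hc, ← Real.rpow_natCast (((r : ℝ) + 1) ^ ((1 : ℝ) / r)) r,
        ← Real.rpow_mul (by positivity)]
    rw [one_div, inv_mul_cancel₀ (ne_of_gt hr0), Real.rpow_one]
  -- m * c ≤ t - 1
  have hfl : (m:ℝ) ≤ ((t:ℝ) - 1) / c := Nat.floor_le (by positivity)
  have hmc : (m:ℝ) * c ≤ (t:ℝ) - 1 := by
    rwa [le_div_iff₀ hc0] at hfl
  -- (r+1) * m^r ≤ (t-1)^r in ℕ
  have hpow : (r + 1) * m ^ r ≤ (t - 1) ^ r := by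
    have h1 : ((m:ℝ) * c) ^ r ≤ ((t:ℝ) - 1) ^ r :=
      pow_le_pow_left₀ (by positivity) hmc r
    rw [mul_pow, hcr] at h1
    have h2 : ((r:ℝ) + 1) * (m:ℝ) ^ r ≤ ((t:ℝ) - 1) ^ r := by linarith
    rw [← hcast] at h2
    exact_mod_cast h2
  -- m < t - 1
  have hmn : m < t - 1 := by
    have h1 : ((t:ℝ) - 1) / c < ((t - 1 : ℕ) : ℝ) := by
      rw [hcast]; exact div_lt_self ht1 hc1
    have hmlt : (m:ℝ) < ((t - 1 : ℕ) : ℝ) := lt_of_le_of_lt hfl h1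
    exact_mod_cast hmlt
  by_cases hcase : m < r
  · rw [Nat.choose_eq_zero_of_lt hcase, Nat.mul_zero]
    exact Nat.choose_pos (by omega)
  · push_neg at hcase
    have hkey := key_descFac (t - 1) r hr m hcase hmn
    have hrn : r ≤ t - 1 := by omega
    -- (r+1) * dF m r < dF (t-1) r
    have hdF : (r + 1) * Nat.descFactorial m r < Nat.descFactorial (t - 1) r := by
      have h1 : (r + 1) * Nat.descFactorial m r * (t - 1) ^ r <
          Nat.descFactorial (t - 1) r * (t - 1) ^ r := by
        calc (r + 1) * Nat.descFactorial m r * (t - 1) ^ r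
            = (r + 1) * (Nat.descFactorial m r * (t - 1) ^ r) := by ring
          _ < (r + 1) * (m ^ r * Nat.descFactorial (t - 1) r) :=
              mul_lt_mul_of_pos_left hkey (by omega)
          _ = ((r + 1) * m ^ r) * Nat.descFactorial (t - 1) r := by ring
          _ ≤ (t - 1) ^ r * Nat.descFactorial (t - 1) r :=
              Nat.mul_le_mul_right _ hpow
          _ = Nat.descFactorial (t - 1) r * (t - 1) ^ r := by ring
      exact Nat.lt_of_mul_lt_mul_right h1
    rw [Nat.descFactorial_eq_factorial_mul_choose, Nat.descFactorial_eq_factorial_mul_choose] at hdF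
    have hf : 0 < r.factorial := Nat.factorial_pos r
    have h2 : (r + 1) * Nat.choose m r * r.factorial <
        Nat.choose (t - 1) r * r.factorial := by
      calc (r + 1) * Nat.choose m r * r.factorial
          = (r + 1) * (r.factorial * Nat.choose m r) := by ring
        _ < r.factorial * Nat.choose (t - 1) r := hdF
        _ = Nat.choose (t - 1) r * r.factorial := by ring
    exact Nat.lt_of_mul_lt_mul_right h2
end

section
/- Let G be an S_t-saturated graph on n vertices with exactly m vertices of degree less than t-1, and suppose G contains no copy of K_{r+1}, where r ≥ 2. Then (r-1)n²/(2r) ≥ (1/2)(n-m)(t-1) + binom(m,2). -/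
open SimpleGraph

/-! Adding an edge `uv` raises only the degrees of `u` and `v`, each by one, so saturation forces
the vertices of degree below `t - 1` to form a clique. Counting degrees then gives
`2 e(G) ≥ (n - m)(t - 1) + m(m - 1)`, while Turán's theorem gives `2 r e(G) ≤ (r - 1) n²`. -/

open Finset

namespace SimpleGraph

variable {V : Type*}

lemma ndeg_eq_degree (G : SimpleGraph V) (v : V) [Fintype (G.neighborSet v)] :
    ndeg G v = G.degree v := by
  rw [ndeg, ← card_neighborSet_eq_degree, Set.ncard_eq_toFinset_card', Set.toFinset_card]

lemma ndeg_sup_edge_le (G : SimpleGraph V) (u v w : V) :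
    ndeg (G ⊔ edge u v) w ≤ ndeg G w + 1 := by
  have hedge : ∃ x, (edge u v).neighborSet w ⊆ {x} := by
    by_cases hw : w = u
    · exact ⟨v, fun x hx => by grind [mem_neighborSet]⟩
    · exact ⟨u, fun x hx => by grind [mem_neighborSet]⟩
  obtain ⟨x, hx⟩ := hedge
  calc ndeg (G ⊔ edge u v) w
      ≤ ndeg G w + ((edge u v).neighborSet w).ncard := by
        rw [ndeg, neighborSet_sup]; exact Set.ncard_union_le _ _
    _ ≤ ndeg G w + 1 := by
        grw [Set.ncard_le_ncard hx (Set.toFinite _), Set.ncard_singleton]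

lemma ndeg_sup_edge_of_ne (G : SimpleGraph V) {u v w : V} (hu : w ≠ u) (hv : w ≠ v) :
    ndeg (G ⊔ edge u v) w = ndeg G w := by
  unfold ndeg
  congr 1
  ext x
  simp [edge_adj, hu, hv]

namespace StarSaturated

variable {G : SimpleGraph V} {t : ℕ}

lemma ndeg_lt (h : StarSaturated G t) (v : V) : ndeg G v < t :=
  not_le.1 fun hv => h.1 ⟨v, hv⟩

lemma isClique_setOf_ndeg_lt (h : StarSaturated G t) :
    G.IsClique {v | ndeg G v < t - 1} := by
  intro u hu v hv huv
  by_contra hadj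
  obtain ⟨w, hw⟩ := h.2 u v huv hadj
  have hlt : ndeg (G ⊔ edge u v) w < t := by
    by_cases hwuv : w = u ∨ w = v
    · have hwlow : ndeg G w < t - 1 := by rcases hwuv with rfl | rfl <;> assumption
      have := G.ndeg_sup_edge_le u v w
      omega
    · push Not at hwuv
      rw [G.ndeg_sup_edge_of_ne hwuv.1 hwuv.2]
      exact h.ndeg_lt w
  omega

end StarSaturated

lemma IsClique.card_sub_one_le_degree {G : SimpleGraph V} {s : Finset V}
    (hs : G.IsClique (s : Set V)) {v : V} [Fintype (G.neighborSet v)] (hv : v ∈ s) :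
    #s - 1 ≤ G.degree v := by
  classical
  rw [← card_erase_of_mem hv]
  refine card_le_card fun x hx => (mem_neighborFinset G v x).2 ?_
  exact hs hv (mem_of_mem_erase hx) (ne_of_mem_erase hx).symm

variable [Fintype V] {G : SimpleGraph V} [DecidableRel G.Adj]

lemma IsClique.card_compl_mul_add_two_mul_choose_le_two_mul_card_edgeFinset {s : Finset V}
    (hs : G.IsClique (s : Set V)) {d : ℕ} (hd : ∀ v ∉ s, d ≤ G.degree v) :
    (Fintype.card V - #s) * d + 2 * (#s).choose 2 ≤ 2 * #G.edgeFinset := by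
  classical
  have hclique : #s * (#s - 1) ≤ ∑ v ∈ s, G.degree v := by
    simpa using card_nsmul_le_sum s _ _ fun v hv => hs.card_sub_one_le_degree hv
  have hrest : (Fintype.card V - #s) * d ≤ ∑ v ∈ sᶜ, G.degree v := by
    simpa [card_compl] using card_nsmul_le_sum sᶜ _ _ fun v hv => hd v (mem_compl.1 hv)
  rw [← sum_degrees_eq_twice_card_edges, ← sum_add_sum_compl s, Nat.choose_two_right,
    Nat.mul_div_cancel' (Nat.even_mul_pred_self _).two_dvd]
  omega

lemma CliqueFree.two_mul_mul_card_edgeFinset_le {r : ℕ} (hG : G.CliqueFree (r + 1)) :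
    2 * r * #G.edgeFinset ≤ (r - 1) * Fintype.card V ^ 2 := by
  rcases r.eq_zero_or_pos with rfl | hr
  · simp
  obtain ⟨H, _, hH⟩ := exists_isTuranMaximal (V := V) hr
  calc 2 * r * #G.edgeFinset
      ≤ 2 * r * #H.edgeFinset := Nat.mul_le_mul_left _ (hH.2 hG)
    _ = 2 * r * #(turanGraph (Fintype.card V) r).edgeFinset := by
        rw [hH.nonempty_iso_turanGraph.some.card_edgeFinset_eq]
    _ ≤ (r - 1) * Fintype.card V ^ 2 := mul_card_edgeFinset_turanGraph_le

end SimpleGraph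

theorem stmt11 {V : Type*} [Fintype V] (G : SimpleGraph V) (t r n m : ℕ)
    (hr : 2 ≤ r)
    (hsat : StarSaturated G t) (hfree : G.CliqueFree (r + 1))
    (hn : n = Fintype.card V) (hm : m = {v : V | ndeg G v < t - 1}.ncard) :
    (1 / 2) * ((n : ℝ) - m) * ((t : ℝ) - 1) + (Nat.choose m 2 : ℝ) ≤
      ((r : ℝ) - 1) * (n : ℝ) ^ 2 / (2 * r) := by
  classical
  subst hn
  set L : Finset V := {v | ndeg G v < t - 1}
  have hmL : m = #L := by
    rw [hm, ← Set.ncard_coe_finset, coe_filter_univ]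
  have hclique : G.IsClique (L : Set V) := by
    simpa [L] using hsat.isClique_setOf_ndeg_lt
  have hcount := hclique.card_compl_mul_add_two_mul_choose_le_two_mul_card_edgeFinset
    (d := t - 1) fun v hv => by simpa [L, ndeg_eq_degree] using hv
  have hturan := hfree.two_mul_mul_card_edgeFinset_le
  rw [← hmL] at hcount
  have hmn : m ≤ Fintype.card V := hmL ▸ card_le_univ L
  have hr0 : (0 : ℝ) < r := by exact_mod_cast (by omega : 0 < r)
  have ht : (t : ℝ) - 1 ≤ ((t - 1 : ℕ) : ℝ) := by rcases t with _ | t <;> simp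
  have hcountR : ((Fintype.card V : ℝ) - m) * (t - 1) + 2 * m.choose 2 ≤ 2 * #G.edgeFinset := by
    have hcast := (Nat.cast_le (α := ℝ)).2 hcount
    push_cast [Nat.cast_sub hmn] at hcast
    have hmnR : (m : ℝ) ≤ Fintype.card V := by exact_mod_cast hmn
    nlinarith [mul_le_mul_of_nonneg_left ht (sub_nonneg.2 hmnR)]
  have hturanR : 2 * r * (#G.edgeFinset : ℝ) ≤ (r - 1) * Fintype.card V ^ 2 := by
    have hcast := (Nat.cast_le (α := ℝ)).2 hturan
    push_cast [Nat.cast_sub (by omega : 1 ≤ r)] at hcast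
    exact hcast
  rw [le_div_iff₀ (by positivity)]
  nlinarith [mul_le_mul_of_nonneg_left hcountR hr0.le]
end

section
/- Let a, r be positive integers with ar even, and let k be an integer with 0 ≤ k ≤ a(r-1). Then the complete r-partite graph K_{a,...,a} (each part of size a) contains a k-regular spanning subgraph. -/
/-!
View the vertex set `Fin r × Fin a` as the additive group `ℤ/r × ℤ/a`, whose parts are the cosets
of `0 × ℤ/a`. For a set `S` of jumps closed under negation, all with nonzero first coordinate, the
circulant graph with jumps `S` is `#S`-regular and never joins two vertices of the same part. The
`a(r-1)` admissible jumps split into pairs `±s` and self-inverse jumps, `(r/2, 0)` being one when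
`r` is even; so every even degree is reached, and every odd degree when `r` is even. When `r` and
`k` are odd, `a` is even, and a `(k-1)`-regular circulant graph avoiding the jumps `±(1,1)` is
completed by the perfect matching `(x, y) ~ (x+1, y+1)` for `y` even.
-/

open SimpleGraph

open Finset

theorem Finset.neg_mem_erase_erase_neg {α : Type*} [DecidableEq α] [InvolutiveNeg α]
    {T : Finset α} (hT : ∀ x ∈ T, -x ∈ T) (s : α) :
    ∀ x ∈ (T.erase s).erase (-s), -x ∈ (T.erase s).erase (-s) := by
  intro x hx
  simp only [mem_erase, ne_eq, neg_eq_iff_eq_neg, neg_neg] at hx ⊢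
  exact ⟨hx.2.1, hx.1, hT x hx.2.2⟩

theorem Finset.exists_subset_card_neg_mem_of_even {α : Type*} [DecidableEq α] [InvolutiveNeg α]
    (T : Finset α) (hT : ∀ x ∈ T, -x ∈ T) {k : ℕ} (hk : k ≤ #T) (hke : Even k) :
    ∃ S ⊆ T, (∀ x ∈ S, -x ∈ S) ∧ #S = k := by
  induction T using Finset.strongInduction generalizing k with
  | H T ih =>
    obtain rfl | ⟨j, rfl⟩ : k = 0 ∨ ∃ j, k = j + 2 := by
      obtain ⟨m, rfl⟩ := hke; rcases m with _ | m
      · exact .inl rfl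
      · exact .inr ⟨m + m, by omega⟩
    · exact ⟨∅, empty_subset _, by simp, rfl⟩
    by_cases hfix : ∀ x ∈ T, -x = x
    · obtain ⟨S, hST, hScard⟩ := exists_subset_card_eq hk
      exact ⟨S, hST, fun x hx => (hfix x (hST hx)).symm ▸ hx, hScard⟩
    push Not at hfix
    obtain ⟨s, hs, hns⟩ := hfix
    set T' := (T.erase s).erase (-s)
    have hT'T : T' ⊂ T := (erase_ssubset hs).trans_le' (erase_subset _ _)
    have hT'card : #T' = #T - 2 := by
      rw [card_erase_of_mem (mem_erase.2 ⟨hns, hT s hs⟩), card_erase_of_mem hs]; omega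
    obtain ⟨S, hST', hS, hScard⟩ := ih T' hT'T (neg_mem_erase_erase_neg hT s) (k := j) (by omega)
      (by simpa [Nat.even_add] using hke)
    have hsS : s ∉ S := fun h => by simpa [T'] using hST' h
    have hnsS : -s ∉ S := fun h => by simpa [T'] using hST' h
    refine ⟨insert s (insert (-s) S), ?_, ?_, ?_⟩
    · exact insert_subset hs (insert_subset (hT s hs) (hST'.trans hT'T.subset))
    · intro x hx
      simp only [mem_insert] at hx ⊢
      rcases hx with rfl | rfl | hx
      · exact .inr (.inl rfl)
      · exact .inl (neg_neg _)
      · exact .inr (.inr (hS x hx))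
    · rw [card_insert_of_notMem (by simp [hns.symm, hsS]), card_insert_of_notMem hnsS, hScard]

theorem Finset.exists_subset_card_neg_mem {α : Type*} [DecidableEq α] [InvolutiveNeg α]
    (T : Finset α) (hT : ∀ x ∈ T, -x ∈ T) {k : ℕ} (hk : k ≤ #T)
    (hpar : Even k ∨ ∃ t ∈ T, -t = t) :
    ∃ S ⊆ T, (∀ x ∈ S, -x ∈ S) ∧ #S = k := by
  by_cases hke : Even k
  · exact T.exists_subset_card_neg_mem_of_even hT hk hke
  obtain ⟨t, ht, htt⟩ := hpar.resolve_left hke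
  have hT' : ∀ x ∈ T.erase t, -x ∈ T.erase t := fun x hx => by
    simp only [mem_erase] at hx ⊢
    exact ⟨fun h => hx.1 (by rw [← neg_neg x, h, htt]), hT x hx.2⟩
  obtain ⟨S, hST, hS, hScard⟩ := (T.erase t).exists_subset_card_neg_mem_of_even hT'
    (k := k - 1) (by rw [card_erase_of_mem ht]; omega)
    (by rcases Nat.not_even_iff_odd.1 hke with ⟨m, rfl⟩; simp)
  have htS : t ∉ S := fun h => by simpa using hST h
  refine ⟨insert t S, insert_subset ht (hST.trans (erase_subset _ _)), ?_, ?_⟩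
  · intro x hx
    rcases mem_insert.1 hx with rfl | hx
    · rw [htt]; exact mem_insert_self _ _
    · exact mem_insert_of_mem (hS x hx)
  · rw [card_insert_of_notMem htS, hScard]
    have : k ≠ 0 := by rintro rfl; exact hke .zero
    omega

namespace SimpleGraph

theorem ndeg_sup_of_disjoint {V : Type*} [Finite V] {G H : SimpleGraph V} (h : Disjoint G H)
    (v : V) : ndeg (G ⊔ H) v = ndeg G v + ndeg H v := by
  refine Set.ncard_union_eq (Set.disjoint_left.2 fun w hG hH => ?_)
  exact (h.le_bot : G ⊓ H ≤ ⊥) ⟨hG, hH⟩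

section Circulant

variable {G : Type*} [AddGroup G]

theorem circulantGraph_adj_of_neg_mem {s : Set G} (hs : ∀ x ∈ s, -x ∈ s) (h0 : 0 ∉ s)
    (u v : G) : (circulantGraph s).Adj u v ↔ v - u ∈ s := by
  rw [circulantGraph_adj]
  constructor
  · rintro ⟨-, h | h⟩
    · simpa using hs _ h
    · exact h
  · intro h
    exact ⟨fun huv => h0 (by simpa [huv] using h), .inr h⟩

theorem ndeg_circulantGraph (s : Finset G) (hs : ∀ x ∈ s, -x ∈ s) (h0 : 0 ∉ s) (v : G) :
    ndeg (circulantGraph (s : Set G)) v = #s := by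
  have : (circulantGraph (s : Set G)).neighborSet v = (· + v) '' s := by
    ext w
    rw [mem_neighborSet, circulantGraph_adj_of_neg_mem hs h0, Set.image_add_right]
    simp [sub_eq_add_neg]
  rw [ndeg, this, Set.ncard_image_of_injective _ (add_left_injective v), Set.ncard_coe_finset]

theorem disjoint_circulantGraph {s t : Set G} (hs : ∀ x ∈ s, -x ∈ s) (hst : Disjoint s t) :
    Disjoint (circulantGraph s) (circulantGraph t) := by
  rw [disjoint_iff_inf_le]
  rintro u v ⟨⟨-, hs₁⟩, ⟨-, ht⟩⟩
  have hboth : u - v ∈ s ∧ v - u ∈ s := by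
    rcases hs₁ with h | h
    exacts [⟨h, by simpa using hs _ h⟩, ⟨by simpa using hs _ h, h⟩]
  rcases ht with h | h
  exacts [Set.disjoint_left.1 hst hboth.1 h, Set.disjoint_left.1 hst hboth.2 h]

end Circulant

section Shift

variable {G : Type*} [AddCommGroup G]

def shiftMatching (E : Set G) (d : G) : SimpleGraph G :=
  fromRel fun x y => x ∈ E ∧ y = x + d

theorem shiftMatching_le_circulantGraph (E : Set G) (d : G) :
    shiftMatching E d ≤ circulantGraph {d} := by
  rintro u v ⟨huv, ⟨-, rfl⟩ | ⟨-, rfl⟩⟩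
  · exact ⟨huv, .inr (by simp)⟩
  · exact ⟨huv, .inl (by simp)⟩

theorem ndeg_shiftMatching {E : Set G} {d : G} (hE : ∀ x, x + d ∈ E ↔ x ∉ E) (x : G) :
    ndeg (shiftMatching E d) x = 1 := by
  have hd : d ≠ 0 := by rintro rfl; simpa using hE 0
  refine Set.ncard_eq_one.2 ?_
  by_cases hx : x ∈ E
  · refine ⟨x + d, Set.ext fun y => ?_⟩
    simp only [mem_neighborSet, shiftMatching, fromRel_adj, Set.mem_singleton_iff]
    constructor
    · rintro ⟨-, ⟨-, rfl⟩ | ⟨hy, rfl⟩⟩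
      · rfl
      · exact absurd hy ((hE y).1 hx)
    · rintro rfl
      exact ⟨fun h => hd (by simpa using h), .inl ⟨hx, rfl⟩⟩
  · refine ⟨x - d, Set.ext fun y => ?_⟩
    simp only [mem_neighborSet, shiftMatching, fromRel_adj, Set.mem_singleton_iff]
    constructor
    · rintro ⟨-, ⟨hx', -⟩ | ⟨-, rfl⟩⟩
      · exact absurd hx' hx
      · simp
    · rintro rfl
      refine ⟨fun h => hd (by simpa using h.symm), .inr ⟨?_, by simp⟩⟩
      exact not_not.1 fun h => hx (by simpa using (hE (x - d)).2 h)

end Shift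

theorem circulantGraph_le_fromRel_fst {A B : Type*} [AddGroup A] [AddGroup B] {s : Set (A × B)}
    (hs : ∀ x ∈ s, x.1 ≠ 0) : circulantGraph s ≤ fromRel fun x y : A × B => x.1 ≠ y.1 := by
  rintro u v ⟨huv, h | h⟩
  · exact ⟨huv, .inl (sub_ne_zero.1 (hs _ h))⟩
  · exact ⟨huv, .inr (sub_ne_zero.1 (hs _ h))⟩

section Multipartite

variable {A B : Type*} [AddCommGroup A] [AddCommGroup B]

theorem exists_le_fromRel_fst_ndeg_eq (T : Finset (A × B)) (hT : ∀ x ∈ T, -x ∈ T)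
    (hT0 : ∀ x ∈ T, x.1 ≠ 0) {k : ℕ} (hk : k ≤ #T) (hpar : Even k ∨ ∃ t ∈ T, -t = t) :
    ∃ H ≤ fromRel (fun x y : A × B => x.1 ≠ y.1), ∀ v, ndeg H v = k := by
  classical
  obtain ⟨S, hST, hS, rfl⟩ := T.exists_subset_card_neg_mem hT hk hpar
  have hS0 : ∀ x ∈ S, x.1 ≠ 0 := fun x hx => hT0 x (hST hx)
  exact ⟨circulantGraph S, circulantGraph_le_fromRel_fst hS0,
    ndeg_circulantGraph S hS fun h => hS0 0 h rfl⟩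

theorem exists_le_fromRel_fst_ndeg_eq_add_one [Finite A] [Finite B] (T : Finset (A × B))
    (hT : ∀ x ∈ T, -x ∈ T) (hT0 : ∀ x ∈ T, x.1 ≠ 0) {k : ℕ} (hk : k + 2 ≤ #T) (hke : Even k)
    {d : A × B} (hd : d.1 ≠ 0) {E : Set (A × B)} (hE : ∀ x, x + d ∈ E ↔ x ∉ E) :
    ∃ H ≤ fromRel (fun x y : A × B => x.1 ≠ y.1), ∀ v, ndeg H v = k + 1 := by
  classical
  obtain ⟨S, hST, hS, rfl⟩ := ((T.erase d).erase (-d)).exists_subset_card_neg_mem_of_even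
    (neg_mem_erase_erase_neg hT d) (by
      have := pred_card_le_card_erase (s := T) (a := d)
      have := pred_card_le_card_erase (s := T.erase d) (a := -d)
      omega) hke
  have hS0 : ∀ x ∈ S, x.1 ≠ 0 := fun x hx => hT0 x (mem_of_mem_erase (mem_of_mem_erase (hST hx)))
  have hdS : d ∉ S := fun h => by simpa using hST h
  have hM := shiftMatching_le_circulantGraph E d
  have hdisj : Disjoint (circulantGraph (S : Set (A × B))) (shiftMatching E d) :=
    (disjoint_circulantGraph hS (by simpa using hdS)).mono_right hM
  refine ⟨circulantGraph S ⊔ shiftMatching E d, sup_le (circulantGraph_le_fromRel_fst hS0)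
    (hM.trans (circulantGraph_le_fromRel_fst (by simpa using hd))), fun v => ?_⟩
  rw [ndeg_sup_of_disjoint hdisj, ndeg_circulantGraph S hS (fun h => hS0 0 h rfl),
    ndeg_shiftMatching hE]

end Multipartite

end SimpleGraph

theorem Fin.neg_half {n : ℕ} (hn : Even n) (h : n / 2 < n) :
    -(⟨n / 2, h⟩ : Fin n) = ⟨n / 2, h⟩ := by
  obtain ⟨m, rfl⟩ := hn
  ext
  rw [Fin.val_neg', Fin.val_mk, Nat.mod_eq_of_lt (by omega)]
  omega

theorem Fin.even_val_add_one_iff {n : ℕ} [NeZero n] (hn : Even n) (x : Fin n) :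
    Even (x + 1).val ↔ ¬Even x.val := by
  have : 1 < n := by obtain ⟨m, rfl⟩ := hn; have := NeZero.ne (m + m); omega
  simp [Fin.val_add, Nat.even_iff, Nat.mod_mod_of_dvd _ (even_iff_two_dvd.1 hn),
    Nat.one_mod_eq_one.2 this.ne']
  omega

theorem stmt12 (a r k : ℕ) (ha : 0 < a) (hr : 0 < r) (heven : Even (a * r))
    (hk : k ≤ a * (r - 1)) :
    ∃ H : SimpleGraph (Fin r × Fin a),
      H ≤ SimpleGraph.fromRel (fun x y : Fin r × Fin a => x.1 ≠ y.1) ∧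
        ∀ v, ndeg H v = k := by
  have : NeZero r := ⟨hr.ne'⟩
  have : NeZero a := ⟨ha.ne'⟩
  set T : Finset (Fin r × Fin a) := (univ.erase 0) ×ˢ univ
  have hT : ∀ x ∈ T, -x ∈ T := by simp [T]
  have hT0 : ∀ x ∈ T, x.1 ≠ 0 := by simp [T]
  have hTcard : #T = a * (r - 1) := by simp [T, card_product, mul_comm]
  by_cases hpar : Even k ∨ Even r
  · refine exists_le_fromRel_fst_ndeg_eq T hT hT0 (hTcard ▸ hk) (hpar.imp_right fun hre => ?_)
    have : r / 2 ≠ 0 := by obtain ⟨m, hm⟩ := hre; omega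
    exact ⟨(⟨r / 2, by omega⟩, 0), by simpa [T, Fin.ext_iff], by simp [Fin.neg_half hre]⟩
  obtain ⟨hko, hro⟩ := not_or.1 hpar
  have hae : Even a := (Nat.even_mul.1 heven).resolve_right hro
  obtain ⟨j, rfl⟩ := Nat.not_even_iff_odd.1 hko
  obtain ⟨m, hm⟩ := hae.mul_right (r - 1)
  have h1 : (1 : Fin r) ≠ 0 := by
    have : r ≠ 1 := by rintro rfl; simp at hk
    simp [Fin.ext_iff, Nat.mod_eq_of_lt (show 1 < r by omega)]
  exact exists_le_fromRel_fst_ndeg_eq_add_one T hT hT0 (by omega) (even_two_mul j) (d := (1, 1))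
    h1 (E := {v | Even v.2.val}) fun v => Fin.even_val_add_one_iff hae v.2
end
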